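/- arXiv:2512.15165 — 2 statements merged into one kernel-verified Lean document; each statement's English description precedes it below -/
import Mathlib

section
/- The value function Ψ is asymmetric around the reference point s = 1: for every d with 0 < d ≤ 1, one has Ψ(1+d) < -Ψ(1-d), i.e. the incentive above the reference level is strictly weaker than the disincentive an equal distance below it. -/
/-!
Both sides equal `c d / (a s + 1)` for `s = 1 ± d`, with `c = μ / (β (1 - μ)) > 0` and
`a = (1 + μ) / (1 - μ) > 0`; the denominator at `1 + d` is the larger one, and the one at `1 - d`
stays positive because `d ≤ 1`.
-/

theorem mul_sub_one_div_lt_neg_mul_sub_one_div {a c d : ℝ} (ha : 0 < a) (hc : 0 < c)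
    (hd : 0 < d) (hpos : 0 < a * (1 - d) + 1) :
    c * (1 + d - 1) / (a * (1 + d) + 1) < -(c * (1 - d - 1) / (a * (1 - d) + 1)) :=
  calc c * (1 + d - 1) / (a * (1 + d) + 1) = c * d / (a * (1 + d) + 1) := by ring
    _ < c * d / (a * (1 - d) + 1) :=
      div_lt_div_of_pos_left (mul_pos hc hd) hpos (by nlinarith)
    _ = -(c * (1 - d - 1) / (a * (1 - d) + 1)) := by ring

/-- Asymmetry of Ψ around the reference point s = 1:
for 0 < d ≤ 1, Ψ(1+d) < -Ψ(1-d). -/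
theorem psi_asymmetry
    (β μ : ℝ) (hβ : 0 < β) (hμ0 : 0 < μ) (hμ1 : μ < 1)
    (Ψ : ℝ → ℝ)
    (hΨ : ∀ s, Ψ s = (1/β) * (μ/(1-μ)) * (s - 1) / (((1+μ)/(1-μ)) * s + 1)) :
    ∀ d : ℝ, 0 < d → d ≤ 1 → Ψ (1 + d) < -Ψ (1 - d) := by
  intro d hd0 hd1
  have h1μ : 0 < 1 - μ := sub_pos.mpr hμ1
  have ha : 0 < (1 + μ) / (1 - μ) := div_pos (by linarith) h1μ
  have hc : 0 < 1 / β * (μ / (1 - μ)) := mul_pos (one_div_pos.mpr hβ) (div_pos hμ0 h1μ)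
  have hpos : 0 < (1 + μ) / (1 - μ) * (1 - d) + 1 := by
    have := mul_nonneg ha.le (sub_nonneg.mpr hd1)
    linarith
  rw [hΨ, hΨ]
  exact mul_sub_one_div_lt_neg_mul_sub_one_div ha hc hd0 hpos
end

section
/- If c > 0, β > 0, 0 < μ < 1, θ > 0, 0 < δ ≤ 2, κ ≥ 0, and η ≥ (βθ(4-δ²)(1+μ) - 1)/(1+μ), then the updated number of contacts c' = c - β(Ψ(c/c̄) + Φ(v) - κ)c + ηc remains nonnegative, where Ψ and Φ satisfy the bounds Ψ(c/c̄) ≤ (1/β)·μ/(1+μ) and Φ(v) ≤ θ(4-δ²). -/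
/-! The update multiplies `c` by `1 - β(Ψ + Φ - κ) + η`. The bound on `Ψ` spends a share
`μ/(1+μ)` of the unit budget, and the lower bound on `η` pays for the `Φ` term out of the
remaining share `1/(1+μ)`, so the factor is at least `βκ ≥ 0`. -/

theorem one_sub_mul_add_nonneg_of_budget {β κ η Ψ Φ p q : ℝ} (hβ : 0 ≤ β) (hκ : 0 ≤ κ)
    (hΨ : β * Ψ ≤ p) (hΦ : β * Φ ≤ q) (hη : q - (1 - p) ≤ η) :
    0 ≤ 1 - β * (Ψ + Φ - κ) + η := by
  have hβκ : 0 ≤ β * κ := mul_nonneg hβ hκ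
  linarith

theorem div_one_add_sub_eq {A μ : ℝ} (hμ : 1 + μ ≠ 0) :
    (A * (1 + μ) - 1) / (1 + μ) = A - (1 - μ / (1 + μ)) := by
  field_simp
  ring

theorem contact_update_nonneg_general
    (c β μ θ δ κ η ΨA ΦB : ℝ)
    (hc : 0 < c) (hβ : 0 < β) (hμ0 : 0 < μ)
    (hκ : 0 ≤ κ)
    (hΨ : ΨA ≤ (1/β) * (μ/(1+μ)))
    (hΦ : ΦB ≤ θ * (4 - δ^2))
    (hη : η ≥ (β*θ*(4 - δ^2)*(1+μ) - 1)/(1+μ)) :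
    0 ≤ c - β * (ΨA + ΦB - κ) * c + η * c := by
  have hΨ' : β * ΨA ≤ μ / (1 + μ) := by rwa [one_div, le_inv_mul_iff₀ hβ] at hΨ
  have hΦ' : β * ΦB ≤ β * (θ * (4 - δ ^ 2)) := mul_le_mul_of_nonneg_left hΦ hβ.le
  have hη' : β * (θ * (4 - δ ^ 2)) - (1 - μ / (1 + μ)) ≤ η := by
    rw [← mul_assoc, ← div_one_add_sub_eq (by positivity)]
    exact hη
  have hfactor := one_sub_mul_add_nonneg_of_budget hβ.le hκ hΨ' hΦ' hη'
  calc 0 ≤ c * (1 - β * (ΨA + ΦB - κ) + η) := mul_nonneg hc.le hfactor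
    _ = c - β * (ΨA + ΦB - κ) * c + η * c := by ring

/-- Nonnegativity of the updated contact number under the lower bound on the noise. -/
theorem contact_update_nonneg
    (c β μ θ δ κ η ΨA ΦB : ℝ)
    (hc : 0 < c) (hβ : 0 < β) (hμ0 : 0 < μ) (hμ1 : μ < 1)
    (hθ : 0 < θ) (hδ0 : 0 < δ) (hδ2 : δ ≤ 2)
    (hκ : 0 ≤ κ)
    (hΨ : ΨA ≤ (1/β) * (μ/(1+μ)))
    (hΦ : ΦB ≤ θ * (4 - δ^2))
    (hη : η ≥ (β*θ*(4 - δ^2)*(1+μ) - 1)/(1+μ)) :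
    0 ≤ c - β * (ΨA + ΦB - κ) * c + η * c :=
  contact_update_nonneg_general c β μ θ δ κ η ΨA ΦB hc hβ hμ0 hκ hΨ hΦ hη
end
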